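/- arXiv:1105.3623 — 11 statements merged into one kernel-verified Lean document; each statement's English description precedes it below -/
import Mathlib

section
/- For every integer n ≥ 3 and every real number λ, det(Λ_n − λ·I) equals the value of the polynomial A_n evaluated at 2 − λ; that is, the characteristic determinant of the Laplacian of the cycle Z_n is A_n(2 − λ). -/
open Polynomial

/-- The sequence of integer polynomials `L 0 = 1`, `L 1 = X`,
`L (n+2) = X * L (n+1) - L n`. -/
noncomputable def L : ℕ → Polynomial ℤ
  | 0 => 1
  | 1 => X
  | n + 2 => X * L (n + 1) - L n

/-- The sequence of integer polynomials `A 0 = 0`, `A 1 = X - 2`,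
`A n = L n - L (n-2) - 2` for `n ≥ 2`. -/
noncomputable def A : ℕ → Polynomial ℤ
  | 0 => 0
  | 1 => X - 2
  | n + 2 => L (n + 2) - L n - 2

/-- The Laplacian of the Cayley graph of `Z n` with generating set `{1, -1}`:
diagonal entries `2`, entries `-1` between neighbouring vertices, `0` otherwise. -/
noncomputable def cycleLaplacian (n : ℕ) : Matrix (ZMod n) (ZMod n) ℝ :=
  Matrix.of fun i j =>
    if i = j then 2 else if j = i + 1 ∨ j = i - 1 then -1 else 0

/-- The characteristic determinant `det (Λ_n - λ • I)` of the cycle Laplacian. -/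
noncomputable def lapCharDet (n : ℕ) (lam : ℝ) : ℝ :=
  if h : n = 0 then 0
  else
    haveI : NeZero n := ⟨h⟩
    (cycleLaplacian n - lam • (1 : Matrix (ZMod n) (ZMod n) ℝ)).det

/-- `lam` is an eigenvalue of the Laplacian of `Z n`. -/
def IsLapEigenvalue (n : ℕ) (lam : ℝ) : Prop := lapCharDet n lam = 0

/-!
Write `P` for the cyclic shift on `ZMod n` and `x = 2 - λ`. For `n ≥ 3` the matrix `Λ_n - λ` is
`x - P - P⁻¹`. Over `ℂ` write `x = α + β` with `α β = 1`; then `x - P - P⁻¹ = -P⁻¹ (α - P) (β - P)`,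
and since `det (t - P) = t ^ n - 1` the determinant is `-(α ^ n - 1) (β ^ n - 1) = α ^ n + β ^ n - 2`.
Finally `α ^ n + β ^ n` is the Dickson polynomial `D_n(α + β, 1) = L_n - L_{n-2}` evaluated at `x`.
-/

open Matrix

theorem L_add_two_sub_L : ∀ n : ℕ, L (n + 2) - L n = dickson 1 (1 : ℤ) (n + 2)
  | 0 => by simp [L]; ring
  | 1 => by simp [L]; ring
  | n + 2 => by
    rw [dickson_add_two, ← L_add_two_sub_L (n + 1), ← L_add_two_sub_L n]
    simp only [L, C_1, one_mul]
    ring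

theorem A_eq_dickson_sub_two {n : ℕ} (hn : 2 ≤ n) : A n = dickson 1 (1 : ℤ) n - 2 := by
  obtain ⟨n, rfl⟩ := Nat.exists_eq_add_of_le' hn
  rw [← L_add_two_sub_L]
  rfl

theorem Matrix.permMatrix_apply {R ι : Type*} [Zero R] [One R] [DecidableEq ι]
    (σ : Equiv.Perm ι) (i j : ι) : σ.permMatrix R i j = if σ i = j then 1 else 0 := by
  simp

abbrev cyclicShift (R : Type*) [Zero R] [One R] (n : ℕ) : Matrix (ZMod n) (ZMod n) R :=
  (Equiv.addRight 1).permMatrix R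

section CommRing

variable {R : Type*} [CommRing R]

theorem add_smul_one_sub_sub_eq_neg_mul {A : Type*} [Ring A] [Algebra R A]
    {p q : A} (hqp : q * p = 1) {α β : R} (hαβ : α * β = 1) :
    (α + β) • 1 - p - q = -q * ((α • 1 - p) * (β • 1 - p)) := by
  have hqpp : q * (p * p) = p := by rw [← mul_assoc, hqp, one_mul]
  simp only [mul_sub, sub_mul, neg_mul, mul_smul_comm, smul_mul_assoc, mul_one, one_mul, hqp, hqpp]
  linear_combination (norm := module) hαβ • q

theorem det_smul_one_sub_addRight_one_permMatrix_fin (m : ℕ) (t : R) :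
    det (t • (1 : Matrix (Fin (m + 1)) (Fin (m + 1)) R) - (Equiv.addRight 1).permMatrix R)
      = t ^ (m + 1) - 1 := by
  rcases m with _ | m
  · simp [det_unique]
  have hM (i j : Fin (m + 2)) : (t • 1 - (Equiv.addRight 1).permMatrix R) i j
      = (if i = j then t else 0) - if i + 1 = j then 1 else 0 := by
    simp [one_apply]
  generalize (t • 1 - (Equiv.addRight 1).permMatrix R : Matrix (Fin (m + 2)) (Fin (m + 2)) R) = M
    at hM ⊢
  have hupper : (M.submatrix Fin.succ Fin.succ).IsUpperTriangular := by
    intro i j (hji : j < i)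
    have : i.succ + 1 ≠ j.succ := by
      rw [Fin.ne_iff_vne, Fin.val_add_one]; split_ifs <;> simp; omega
    rw [submatrix_apply, hM, if_neg ((Fin.succ_injective _).ne hji.ne'), if_neg this, sub_zero]
  have hlower : (M.submatrix Fin.castSucc Fin.succ).IsLowerTriangular := by
    intro i j (hij : i < j)
    have : i.castSucc ≠ j.succ := by
      rw [Fin.ne_iff_vne]; simp; omega
    rw [submatrix_apply, hM, if_neg this, Fin.coeSucc_eq_succ,
      if_neg ((Fin.succ_injective _).ne hij.ne), sub_zero]
  -- Column 0 has its only nonzero entries `t` in row 0 and `-1` in the last row.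
  rw [det_succ_column_zero, Fintype.sum_eq_add 0 (Fin.last _) (Fin.ext_iff.not.2 (by simp))]
  · rw [Fin.succAbove_zero, Fin.succAbove_last, det_of_isUpperTriangular hupper,
      det_of_isLowerTriangular _ hlower]
    simp [hM, Fin.coeSucc_eq_succ, Fin.castSucc_lt_succ.ne, ← mul_pow]
    ring
  · rintro i ⟨h0, hl⟩
    have : i + 1 ≠ 0 := by
      rw [Fin.ne_iff_vne, Fin.val_add_one, if_neg hl]; simp
    rw [hM, if_neg h0, if_neg this]; simp

theorem det_smul_one_sub_cyclicShift (n : ℕ) [NeZero n] (t : R) :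
    det (t • 1 - cyclicShift R n) = t ^ n - 1 := by
  obtain ⟨m, rfl⟩ := Nat.exists_eq_succ_of_ne_zero (NeZero.ne n)
  -- `ZMod (m + 1)` is `Fin (m + 1)` by definition.
  exact det_smul_one_sub_addRight_one_permMatrix_fin m t

theorem det_add_smul_one_sub_cyclicShift_sub_transpose (n : ℕ) [NeZero n] {α β : R}
    (hαβ : α * β = 1) :
    det ((α + β) • 1 - cyclicShift R n - (cyclicShift R n)ᵀ) = α ^ n + β ^ n - 2 := by
  have hinv : (cyclicShift R n)ᵀ * cyclicShift R n = 1 := by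
    rw [transpose_permMatrix, ← permMatrix_mul, mul_inv_cancel, permMatrix_one]
  have hneg : det (-(cyclicShift R n)ᵀ) = -1 := by
    rw [← transpose_neg, det_transpose, ← zero_sub, ← zero_smul R 1, det_smul_one_sub_cyclicShift,
      zero_pow (NeZero.ne n), zero_sub]
  have hpow : α ^ n * β ^ n = 1 := by rw [← mul_pow, hαβ, one_pow]
  rw [add_smul_one_sub_sub_eq_neg_mul hinv hαβ, det_mul, det_mul, hneg,
    det_smul_one_sub_cyclicShift, det_smul_one_sub_cyclicShift]
  linear_combination -hpow

end CommRing

theorem cycleLaplacian_sub_smul_one {n : ℕ} (hn : 3 ≤ n) (lam : ℝ) :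
    cycleLaplacian n - lam • 1 = (2 - lam) • 1 - cyclicShift ℝ n - (cyclicShift ℝ n)ᵀ := by
  have h1 : ∀ i : ZMod n, i + 1 ≠ i := by
    have : Fact (1 < n) := ⟨by omega⟩
    simp
  have h2 : ∀ i : ZMod n, i ≠ i + 1 + 1 := by
    intro i
    rw [add_assoc, Ne, left_eq_add, one_add_one_eq_two, ← Nat.cast_ofNat, ZMod.natCast_eq_zero_iff]
    exact fun h => by have := Nat.le_of_dvd two_pos h; omega
  ext i j
  simp only [cycleLaplacian, Matrix.sub_apply, Matrix.smul_apply, transpose_apply, one_apply,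
    of_apply, permMatrix_apply, Equiv.coe_addRight, eq_sub_iff_add_eq, @eq_comm _ (i + 1) j]
  split_ifs <;> subst_vars <;> simp_all

theorem det_smul_one_sub_cyclicShift_sub_transpose (n : ℕ) [NeZero n] (x : ℝ) :
    det (x • 1 - cyclicShift ℝ n - (cyclicShift ℝ n)ᵀ) = aeval x (dickson 1 (1 : ℤ) n) - 2 := by
  obtain ⟨s, hs⟩ := IsAlgClosed.exists_eq_mul_self ((x : ℂ) ^ 2 - 4)
  set α : ℂ := (x + s) / 2
  set β : ℂ := (x - s) / 2
  have hαβ : α * β = 1 := by linear_combination hs / 4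
  have hx : (x : ℂ) = α + β := by ring
  apply Complex.ofReal_injective
  have hmap : Complex.ofRealHom.mapMatrix (x • 1 - cyclicShift ℝ n - (cyclicShift ℝ n)ᵀ)
      = (x : ℂ) • 1 - cyclicShift ℂ n - (cyclicShift ℂ n)ᵀ := by
    ext i j
    simp only [RingHom.mapMatrix_apply, map_apply, Matrix.sub_apply, Matrix.smul_apply, one_apply,
      transpose_apply, permMatrix_apply]
    split_ifs <;> simp
  have hdickson : (aeval x (dickson 1 (1 : ℤ) n) : ℂ) = α ^ n + β ^ n := by
    rw [← Complex.coe_algebraMap, ← aeval_algebraMap_apply, Complex.coe_algebraMap, hx, aeval_def,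
      eval₂_eq_eval_map, map_dickson, map_one, dickson_one_one_eval_add_inv α β hαβ]
  rw [← Complex.ofRealHom_eq_coe, RingHom.map_det, hmap, Complex.ofReal_sub, Complex.ofReal_ofNat,
    hdickson, hx, det_add_smul_one_sub_cyclicShift_sub_transpose n hαβ]

theorem stmt_2 (n : ℕ) (hn : 3 ≤ n) (lam : ℝ) :
    lapCharDet n lam = Polynomial.aeval (2 - lam) (A n) := by
  have : NeZero n := ⟨by omega⟩
  rw [lapCharDet, dif_neg (NeZero.ne n), cycleLaplacian_sub_smul_one hn,
    det_smul_one_sub_cyclicShift_sub_transpose, A_eq_dickson_sub_two (by omega), map_sub,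
    map_ofNat]
end

section
/- For every natural number n ≥ 1, the polynomial identity A_{2n} = A_n · (A_n + 4) holds in ℤ[X]. -/
open Polynomial

noncomputable def T : ℕ → Polynomial ℤ
  | 0 => 2
  | 1 => X
  | n + 2 => X * T (n + 1) - T n

lemma T_rec (n : ℕ) : T (n + 2) = X * T (n + 1) - T n := by rfl

lemma T_add (n m : ℕ) :
    T (m + n + 2) - T (m + n) = T (m + 1) * T (n + 1) - T m * T n := by
  induction n generalizing m with
  | zero =>
    rw [Nat.add_zero, T_rec m]
    show _ = T (m+1) * T 1 - T m * T 0
    rw [show (T 1 : Polynomial ℤ) = X from rfl, show (T 0 : Polynomial ℤ) = 2 from rfl]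
    ring
  | succ k ih =>
    have h1 : m + (k + 1) + 2 = (m + 1) + k + 2 := by ring
    have h2 : m + (k + 1) = (m + 1) + k := by ring
    rw [h1, h2, ih (m + 1), T_rec m, show T (k+1+1) = X * T k.succ - T k from rfl]
    ring

lemma T_double (n : ℕ) : T (2 * n) = T n * T n - 2 := by
  induction n with
  | zero => show (2 : Polynomial ℤ) = 2 * 2 - 2; ring
  | succ k ih =>
    have h := T_add k k
    have h2 : 2 * (k + 1) = k + k + 2 := by ring
    have h3 : 2 * k = k + k := by ring
    rw [← h3] at h
    rw [h2, ← h3]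
    rw [show T (2*k + 2) = (T (2*k + 2) - T (2*k)) + T (2*k) from by ring, h, ih]
    ring

lemma L_T (n : ℕ) : L (n + 2) - L n = T (n + 2) ∧ L (n + 3) - L (n + 1) = T (n + 3) := by
  induction n with
  | zero =>
    constructor
    · show X * X - 1 - 1 = X * X - 2
      ring
    · show X * (X * X - 1) - X - X = X * (X * X - 2) - X
      ring
  | succ k ih =>
    refine ⟨ih.2, ?_⟩
    have h1 := ih.1
    have h2 := ih.2
    have hL : L (k + 2) = X * L (k + 1) - L k := rfl
    show X * L (k + 3) - L (k + 2) - L (k + 2) = X * T (k + 3) - T (k + 2)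
    linear_combination X * h2 - h1 - hL

lemma AT (n : ℕ) : A n = T n - 2 := by
  match n with
  | 0 => show (0 : Polynomial ℤ) = 2 - 2; ring
  | 1 => rfl
  | n + 2 => show L (n+2) - L n - 2 = T (n+2) - 2; rw [(L_T n).1]

theorem stmt_3 (n : ℕ) (hn : 1 ≤ n) :
    A (2 * n) = A n * (A n + 4) := by
  rw [AT, AT, T_double]
  ring
end

section
/- For all natural numbers n ≥ 1 and k ≥ 1, the polynomial identity A_{(k+1)n} = (A_n + 2) · A_{kn} + 2·A_n − A_{(k−1)n} holds in ℤ[X]. -/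
open Polynomial

noncomputable def Cb : ℕ → Polynomial ℤ
  | 0 => 2
  | 1 => X
  | n + 2 => X * Cb (n + 1) - Cb n

lemma Cb_add_two (n : ℕ) : Cb (n + 2) = X * Cb (n + 1) - Cb n := rfl

lemma L_add_two (n : ℕ) : L (n + 2) = X * L (n + 1) - L n := rfl

lemma CbL : ∀ n : ℕ, Cb (n + 2) = L (n + 2) - L n
  | 0 => by simp [Cb, L]; ring
  | 1 => by simp [Cb, L]; ring
  | n + 2 => by
    have h1 := CbL n
    have h2 := CbL (n + 1)
    rw [Cb_add_two (n + 2), L_add_two (n + 2), show n + 2 + 1 = n + 1 + 2 from by omega,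
      h2, h1, L_add_two n]
    ring

lemma ACb : ∀ n : ℕ, A n = Cb n - 2
  | 0 => by simp [A, Cb]
  | 1 => by simp [A, Cb]
  | n + 2 => by rw [A, CbL]

lemma key : ∀ b a : ℕ, Cb (a + b) * Cb b = Cb (a + 2 * b) + Cb a
  | 0, a => by norm_num [Cb]; ring
  | 1, a => by
    rw [show a + 2 * 1 = a + 2 from by omega, Cb_add_two a, show Cb 1 = X from rfl]
    ring
  | b + 2, a => by
    have h1 := key (b + 1) (a + 1)
    have h2 := key b (a + 2)
    rw [show a + 1 + (b + 1) = a + b + 2 from by omega,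
      show a + 1 + 2 * (b + 1) = a + 2 * b + 2 + 1 from by omega] at h1
    rw [show a + 2 + b = a + b + 2 from by omega,
      show a + 2 + 2 * b = a + 2 * b + 2 from by omega] at h2
    rw [show a + (b + 2) = a + b + 2 from by omega, Cb_add_two b,
      show a + 2 * (b + 2) = (a + 2 * b + 2) + 2 from by omega, Cb_add_two (a + 2 * b + 2)]
    linear_combination (X : Polynomial ℤ) * h1 - h2 - Cb_add_two a

theorem stmt_5 (n k : ℕ) (hn : 1 ≤ n) (hk : 1 ≤ k) :
    A ((k + 1) * n) = (A n + 2) * A (k * n) + 2 * A n - A ((k - 1) * n) := by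
  obtain ⟨m, rfl⟩ : ∃ m, k = m + 1 := ⟨k - 1, by omega⟩
  simp only [Nat.add_sub_cancel]
  have h1 : (m + 1 + 1) * n = m * n + 2 * n := by ring
  have h2 : (m + 1) * n = m * n + n := by ring
  rw [h1, h2, ACb, ACb, ACb, ACb]
  linear_combination - key n (m * n)
end

section
/- For all natural numbers n ≥ 1 and k ≥ 1, the polynomial A_n divides the polynomial A_{kn} in ℤ[X]. -/
open Polynomial

/-- Dickson polynomials. -/
noncomputable def Dck : ℕ → Polynomial ℤ
  | 0 => 2
  | 1 => X
  | n + 2 => X * Dck (n + 1) - Dck n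

lemma Dck_L : ∀ n, Dck (n + 2) = L (n + 2) - L n
  | 0 => by simp [Dck, L]; ring
  | 1 => by simp [Dck, L]; ring
  | n + 2 => by
    have h1 := Dck_L n
    have h2 := Dck_L (n + 1)
    show X * Dck (n + 3) - Dck (n + 2) =
      (X * L (n + 3) - L (n + 2)) - (X * L (n + 1) - L n)
    rw [show n + 1 + 2 = n + 3 from rfl] at h2
    rw [h1, h2]
    ring

lemma A_eq : ∀ n, A n = Dck n - 2
  | 0 => by simp [A, Dck]
  | 1 => rfl
  | n + 2 => by rw [show A (n+2) = L (n+2) - L n - 2 from rfl, Dck_L]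

lemma addf : ∀ b a, b ≤ a → Dck (a + b) = Dck a * Dck b - Dck (a - b)
  | 0, a, _ => by simp [Dck]; ring
  | 1, a, h => by
    obtain ⟨m, rfl⟩ : ∃ m, a = m + 1 := ⟨a - 1, by omega⟩
    show Dck (m + 2) = Dck (m + 1) * X - Dck m
    show X * Dck (m + 1) - Dck m = Dck (m + 1) * X - Dck m
    ring
  | b + 2, a, h => by
    obtain ⟨m, rfl⟩ : ∃ m, a = m + b + 2 := ⟨a - b - 2, by omega⟩
    have h1 := addf (b + 1) (m + b + 3) (by omega)
    have h2 := addf (b + 1) (m + b + 1) (by omega)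
    have h3 := addf b (m + b + 2) (by omega)
    rw [show m + b + 3 + (b + 1) = (m + 2*b + 2) + 2 from by ring,
        show m + b + 3 - (b + 1) = m + 2 from by omega] at h1
    rw [show m + b + 1 + (b + 1) = m + 2*b + 2 from by ring,
        show m + b + 1 - (b + 1) = m from by omega] at h2
    rw [show m + b + 2 + b = m + 2*b + 2 from by ring,
        show m + b + 2 - b = m + 2 from by omega] at h3
    rw [show m + b + 2 + (b + 2) = (m + 2*b + 2) + 2 from by ring,
        show m + b + 2 - (b + 2) = m from by omega]
    have rb : Dck (b + 2) = X * Dck (b + 1) - Dck b := rfl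
    have ra : Dck (m + b + 3) = X * Dck (m + b + 2) - Dck (m + b + 1) := rfl
    have rc : Dck ((m + 2*b + 2) + 2) = X * Dck (m + 2*b + 3) - Dck (m + 2*b + 2) := rfl
    rw [rc] at h1 ⊢
    rw [ra] at h1
    rw [rb]
    linear_combination h1 + h2 - h3

lemma Dck_mul (n : ℕ) : ∀ k, Dck (k * n) = (Dck k).comp (Dck n)
  | 0 => by simp [Dck]
  | 1 => by simp [Dck]
  | k + 2 => by
    have h1 := Dck_mul n (k + 1)
    have h0 := Dck_mul n k
    have hadd := addf n ((k + 1) * n) (by nlinarith)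
    rw [show (k + 1) * n + n = (k + 2) * n from by ring,
        show (k + 1) * n - n = k * n from by rw [add_mul, one_mul, Nat.add_sub_cancel]] at hadd
    have rb : Dck (k + 2) = X * Dck (k + 1) - Dck k := rfl
    rw [hadd, rb, sub_comp, mul_comp, X_comp, h1, h0]; ring

lemma Dck_eval_two : ∀ k, (Dck k).eval 2 = 2
  | 0 => by simp [Dck]
  | 1 => by simp [Dck]
  | k + 2 => by
    have h1 := Dck_eval_two (k + 1)
    have h0 := Dck_eval_two k
    show ((X * Dck (k + 1) - Dck k).eval 2 : ℤ) = 2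
    simp [h1, h0]

theorem stmt_6 (n k : ℕ) (hn : 1 ≤ n) (hk : 1 ≤ k) :
    A n ∣ A (k * n) := by
  rw [A_eq, A_eq, Dck_mul]
  have key : Dck n - Polynomial.C 2 ∣
      (Dck k).comp (Dck n) - (Dck k).comp (Polynomial.C 2) := by
    have := sub_dvd_eval_sub (Dck n) (Polynomial.C 2)
      ((Dck k).map (Polynomial.C : ℤ →+* Polynomial ℤ))
    simpa [eval_map, ← eval₂_eq_eval_map, Polynomial.comp] using this
  rw [comp_C, Dck_eval_two] at key
  simpa using key
end

section
/- For all natural numbers n, k, p with k ≥ 1 and 1 ≤ p < n, the polynomial identity A_{kn+p} = (A_p + 2) · A_{kn} + 2·A_p − A_{kn−p} holds in ℤ[X]. -/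
open Polynomial

/- With `X = 2 cos θ`, `L n` is the Vieta–Fibonacci polynomial `sin ((n+1) θ) / sin θ` and
`A n + 2` the Vieta–Lucas polynomial `2 cos (n θ)`; the identity is then the product formula
`2 cos (a θ) · 2 cos (b θ) = 2 cos ((a+b) θ) + 2 cos ((a-b) θ)`. -/

namespace Polynomial.Chebyshev

variable (R : Type*) [CommRing R]

theorem C_eq_S_sub_S (n : ℤ) : C R n = S R n - S R (n - 2) := by
  linear_combination C_eq_S_sub_X_mul_S R n + S_eq R n

end Polynomial.Chebyshev

open Polynomial.Chebyshev

theorem L_eq_S (n : ℕ) : L n = S ℤ n := by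
  induction n using Nat.twoStepInduction with
  | zero => simp [L]
  | one => simp [L]
  | more n ih₀ ih₁ =>
    rw [L, ih₀, ih₁]
    push_cast
    exact (S_add_two ℤ n).symm

theorem A_eq_C_sub_two : ∀ n : ℕ, A n = C ℤ n - 2
  | 0 => by simp [A]
  | 1 => by simp [A]
  | n + 2 => by
    rw [A, L_eq_S, L_eq_S, C_eq_S_sub_S]
    push_cast
    ring_nf

theorem stmt_8_general (n k p : ℕ) (hk : 1 ≤ k) (hpn : p < n) :
    A (k * n + p) = (A p + 2) * A (k * n) + 2 * A p - A (k * n - p) := by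
  have hle : p ≤ k * n := hpn.le.trans (Nat.le_mul_of_pos_left n hk)
  simp only [A_eq_C_sub_two]
  push_cast [Nat.cast_sub hle]
  linear_combination -(C_mul_C ℤ (k * n) p)

theorem stmt_8 (n k p : ℕ) (hk : 1 ≤ k) (hp : 1 ≤ p) (hpn : p < n) :
    A (k * n + p) = (A p + 2) * A (k * n) + 2 * A p - A (k * n - p) :=
  stmt_8_general n k p hk hpn
end

section
/- For all natural numbers n, p with 1 ≤ p < n, the polynomial identity A_{n+p} = A_n · (A_p + 2) + 2·A_p − A_{n−p} holds in ℤ[X]. -/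
open Polynomial

noncomputable def B : ℕ → Polynomial ℤ
  | 0 => 2
  | 1 => X
  | n + 2 => X * B (n + 1) - B n

lemma B_eq_L : ∀ n, B (n + 2) = L (n + 2) - L n := by
  intro n
  induction n using Nat.twoStepInduction with
  | zero => simp [B, L]; ring
  | one => simp [B, L]; ring
  | more k ih1 ih2 =>
      have hB : B (k + 2 + 2) = X * B (k + 1 + 2) - B (k + 2) := by
        rw [show k + 2 + 2 = (k + 2) + 2 from rfl, B]
      have hL : L (k + 2 + 2) = X * L (k + 1 + 2) - L (k + 2) := by
        rw [show k + 2 + 2 = (k + 2) + 2 from rfl, L]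
      have hL2 : L (k + 2) = X * L (k + 1) - L k := by rw [L]
      linear_combination hB + X * ih2 - ih1 - hL + hL2

lemma A_eq_B : ∀ n, A n = B n - 2 := by
  intro n
  match n with
  | 0 => simp [A, B]
  | 1 => simp [A, B]
  | k + 2 => rw [A, B_eq_L]

lemma B_prod : ∀ p d, B (d + 2 * p) + B d = B (d + p) * B p := by
  intro p
  induction p using Nat.twoStepInduction with
  | zero => intro d; simp [B]; ring
  | one =>
      intro d
      have : d + 2 * 1 = d + 2 := by ring
      rw [this, B]
      simp [B]
      ring
  | more k ih1 ih2 =>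
      intro d
      have e1 := ih2 (d + 1)
      have e2 := ih1 (d + 2)
      have hB : B (k + 2) = X * B (k + 1) - B k := by rw [B]
      have hBd : B (d + 2) = X * B (d + 1) - B d := by rw [B]
      have hBd24 : B (d + 2 * (k + 2)) = X * B (d + 2 * k + 3) - B (d + 2 * k + 2) := by
        have : d + 2 * (k + 2) = (d + 2 * k + 2) + 2 := by ring
        rw [this, B]
      have h1 : d + 1 + 2 * (k + 1) = d + 2 * k + 3 := by ring
      have h2 : d + 2 + 2 * k = d + 2 * k + 2 := by ring
      have h3 : d + 1 + (k + 1) = d + (k + 2) := by ring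
      have h4 : d + 2 + k = d + (k + 2) := by ring
      rw [h1, h3] at e1
      rw [h2, h4] at e2
      rw [hBd24, hB]
      have : X * B (d + 2 * k + 3) = X * (B (d + (k + 2)) * B (k + 1)) - X * B (d + 1) := by
        rw [← e1]; ring
      rw [this]
      linear_combination -e2 + hBd

theorem stmt_9 (n p : ℕ) (hp : 1 ≤ p) (hpn : p < n) :
    A (n + p) = A n * (A p + 2) + 2 * A p - A (n - p) := by
  obtain ⟨d, rfl⟩ : ∃ d, n = d + p := ⟨n - p, (Nat.sub_add_cancel hpn.le).symm⟩
  have hd : d + p - p = d := by omega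
  have key := B_prod p d
  have h1 : d + p + p = d + 2 * p := by ring
  rw [hd, h1, A_eq_B, A_eq_B, A_eq_B, A_eq_B]
  linear_combination key
end

section
/- Let m, n ≥ 1 be natural numbers and let a be a real number with a ≠ 0. If a is a root of A_n and a is a root of A_m (i.e., A_n(a) = 0 and A_m(a) = 0), then a is a root of A_d, where d = gcd(m, n). (In terms of eigenvalues λ = 2 − a of the cycle Laplacians: any common eigenvalue λ ≠ 2 of the Laplacians of Z_n and Z_m is an eigenvalue attached to the index gcd(m, n).) -/
open Polynomial

lemma aevalL_rec (c : ℂ) (j : ℕ) :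
    aeval c (L (j + 2)) = c * aeval c (L (j + 1)) - aeval c (L j) := by
  rw [show L (j + 2) = X * L (j + 1) - L j from rfl]
  simp

lemma aevalL (z w : ℂ) (hw : z * w = 1) : ∀ k : ℕ,
    (aeval (z + w) (L (k + 2)) - aeval (z + w) (L k) = z ^ (k + 2) + w ^ (k + 2)) ∧
    (aeval (z + w) (L (k + 3)) - aeval (z + w) (L (k + 1)) = z ^ (k + 3) + w ^ (k + 3)) := by
  intro k
  induction k with
  | zero =>
    constructor
    · simp only [L, map_sub, map_mul, map_one, aeval_X, map_ofNat]
      linear_combination 2 * hw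
    · simp only [L, map_sub, map_mul, map_one, aeval_X, map_ofNat]
      linear_combination (3 * z + 3 * w) * hw
  | succ k ih =>
    refine ⟨ih.2, ?_⟩
    have h1 := ih.1
    have h2 := ih.2
    have r1 := aevalL_rec (z + w) (k + 2)
    have r2 := aevalL_rec (z + w) k
    rw [show k + 1 + 3 = k + 2 + 2 from rfl, show k + 1 + 1 = k + 2 from rfl]
    linear_combination r1 + (z + w) * h2 - h1 - r2 + (z ^ (k + 2) + w ^ (k + 2)) * hw

lemma aevalA (z w : ℂ) (hw : z * w = 1) (n : ℕ) (hn : 1 ≤ n) :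
    aeval (z + w) (A n) = z ^ n + w ^ n - 2 := by
  match n, hn with
  | 1, _ =>
    simp only [A, map_sub, aeval_X, map_ofNat]
    ring
  | (k + 2), _ =>
    have h := (aevalL z w hw k).1
    simp only [A, map_sub, map_ofNat]
    linear_combination h

theorem stmt_10 (m n : ℕ) (hm : 1 ≤ m) (hn : 1 ≤ n) (a : ℝ) (ha : a ≠ 0)
    (hAn : Polynomial.aeval a (A n) = 0) (hAm : Polynomial.aeval a (A m) = 0) :
    Polynomial.aeval a (A (Nat.gcd m n)) = 0 := by
  -- pick a complex root z of X² - aX + 1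
  have hdeg : 0 < degree ((X ^ 2 - C (a : ℂ) * X + 1) : ℂ[X]) := by
    have : degree ((X ^ 2 - C (a : ℂ) * X + 1) : ℂ[X]) = 2 := by
      compute_degree!
    rw [this]; norm_num
  obtain ⟨z, hz⟩ := Complex.exists_root hdeg
  have hzroot : z ^ 2 - (a : ℂ) * z + 1 = 0 := by
    simpa [IsRoot] using hz
  have hz0 : z ≠ 0 := by
    rintro rfl
    simp at hzroot
  have hw : z * z⁻¹ = 1 := mul_inv_cancel₀ hz0
  have hc : z + z⁻¹ = (a : ℂ) := by
    have h : (z + z⁻¹) * z = (a : ℂ) * z := by linear_combination hzroot + hw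
    exact mul_right_cancel₀ hz0 h
  -- transfer hypotheses to ℂ
  have key : ∀ k : ℕ, 1 ≤ k → Polynomial.aeval a (A k) = 0 → z ^ k = 1 := by
    intro k hk hA
    have hA' : aeval ((a : ℝ) : ℂ) (A k) = 0 := by
      rw [show ((a : ℝ) : ℂ) = algebraMap ℝ ℂ a from rfl, aeval_algebraMap_apply, hA,
        map_zero]
    rw [← hc, aevalA z z⁻¹ hw k hk] at hA'
    have hwk1 : z ^ k * z⁻¹ ^ k = 1 := by rw [← mul_pow, hw, one_pow]
    have h2 : (z ^ k - 1) ^ 2 = 0 := by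
      linear_combination z ^ k * hA' - hwk1
    have h3 : z ^ k - 1 = 0 := by
      exact pow_eq_zero_iff (by norm_num) |>.mp h2
    linear_combination h3
  have hzn : z ^ n = 1 := key n hn hAn
  have hzm : z ^ m = 1 := key m hm hAm
  have hd : z ^ (Nat.gcd m n) = 1 := by
    have h1 : orderOf z ∣ m := orderOf_dvd_of_pow_eq_one hzm
    have h2 : orderOf z ∣ n := orderOf_dvd_of_pow_eq_one hzn
    exact orderOf_dvd_iff_pow_eq_one.mp (Nat.dvd_gcd h1 h2)
  have hgcd1 : 1 ≤ Nat.gcd m n := Nat.gcd_pos_of_pos_left n hm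
  have hdinv : z⁻¹ ^ (Nat.gcd m n) = 1 := by
    rw [inv_pow, hd, inv_one]
  have hAd : aeval ((a : ℝ) : ℂ) (A (Nat.gcd m n)) = 0 := by
    rw [← hc, aevalA z z⁻¹ hw _ hgcd1, hd, hdinv]
    norm_num
  rw [show ((a : ℝ) : ℂ) = algebraMap ℝ ℂ a from rfl, aeval_algebraMap_apply] at hAd
  exact Complex.ofReal_eq_zero.mp hAd
end

section
/- For all natural numbers n ≥ 1 and k ≥ 1, the polynomial identity A_{kn} = A_k ∘ (A_n + 2) holds in ℤ[X], where ∘ denotes polynomial composition (A_k composed with A_n + 2). -/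
open Polynomial

lemma key_s14 : ∀ m : ℕ, L (m + 2) - L m = dickson 1 (1 : ℤ) (m + 2)
  | 0 => by
      rw [show (0 : ℕ) + 2 = 0 + 2 from rfl, dickson_add_two, dickson_one, dickson_zero, C_1]
      simp only [L]
      push_cast
      ring
  | 1 => by
      have h2 : dickson 1 (1 : ℤ) 2 = X * X - 2 := by
        rw [show (2 : ℕ) = 0 + 2 from rfl, dickson_add_two, dickson_one, dickson_zero, C_1]
        push_cast
        ring
      rw [show (1 : ℕ) + 2 = 1 + 2 from rfl, dickson_add_two,
        show (1 : ℕ) + 1 = 2 from rfl, h2, dickson_one, C_1]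
      simp only [L]
      ring
  | m + 2 => by
      have h1 := key_s14 m
      have h2 := key_s14 (m + 1)
      rw [dickson_add_two, ← h1, ← h2, C_1, one_mul]
      have h3 : L (m + 2) = X * L (m + 1) - L m := rfl
      conv_lhs => rw [show L (m + 2 + 2) = X * L (m + 1 + 2) - L (m + 2) from rfl]
      rw [h3]
      ring

lemma A_add_two : ∀ m : ℕ, A m + 2 = dickson 1 (1 : ℤ) m
  | 0 => by simp [A, dickson_zero]; norm_num
  | 1 => by simp [A, dickson_one]
  | m + 2 => by
      show L (m + 2) - L m - 2 + 2 = _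
      rw [sub_add_cancel, key_s14]

theorem stmt_14 (n k : ℕ) (hn : 1 ≤ n) (hk : 1 ≤ k) :
    A (k * n) = (A k).comp (A n + 2) := by
  have h := dickson_one_one_mul (R := ℤ) k n
  rw [← A_add_two, ← A_add_two, ← A_add_two] at h
  have : (A k + 2).comp (A n + 2) = (A k).comp (A n + 2) + 2 := by
    simp [add_comp]
  rw [this] at h
  exact add_right_cancel h
end

section
/- Let n ≥ 3 and k ≥ 1 be natural numbers, and let a₀ be a real number with A_n(a₀) = 0. Then the multiplicity of a₀ as a root of (the real polynomial obtained from) A_{kn} equals the multiplicity of a₀ as a root of A_n. (In terms of eigenvalues λ = 2 − a₀: every eigenvalue of the Laplacian of Z_n of multiplicity r is an eigenvalue of the Laplacian of Z_{kn} of the same multiplicity r.) -/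
/-!
Over `ℤ`, `L n` is the rescaled Chebyshev polynomial `S n` and `A n + 2` is the Vieta–Lucas
polynomial `C n` (so `A n (t + t⁻¹) = tⁿ + t⁻ⁿ - 2`). The composition law `C (k n) = C k ∘ C n`
gives `A (k n) = A k ∘ (A n + 2)`. Since `A k` has the simple root `2` (its derivative there is
`k²`), `A k = (X - 2) q` with `q 2 = k²`, hence `A (k n) = A n · q(A n + 2)`, and the second
factor takes the value `k² ≠ 0` at every root of `A n`.
-/

open Polynomial

theorem Polynomial.Chebyshev.C_derivative_eq_S (R : Type*) [CommRing R] (n : ℤ) :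
    derivative (C R n) = n * S R (n - 1) := by
  induction n using Polynomial.Chebyshev.induct with
  | zero => simp
  | one => simp
  | add_two n ih1 ih2 =>
    have hC := C_eq_S_sub_X_mul_S R (n + 1)
    have hS := S_add_one R n
    rw [C_add_two, derivative_sub, derivative_mul, derivative_X, ih1, ih2]
    push_cast
    ring_nf at hC hS ⊢
    linear_combination hC - (n : R[X]) * hS
  | neg_add_one n ih1 ih2 =>
    have hC := C_eq_S_sub_X_mul_S R (-n)
    have hS := S_sub_one R (-n - 1)
    rw [C_sub_one, derivative_sub, derivative_mul, derivative_X, ih1, ih2]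
    push_cast
    ring_nf at hC hS ⊢
    linear_combination hC + (n + 1 : R[X]) * hS

theorem Polynomial.eval_divByMonic_X_sub_C {R : Type*} [CommRing R] (p : R[X]) (a : R) :
    (p /ₘ (X - C a)).eval a = (derivative p).eval a := by
  simpa using
    congrArg (eval a) (divByMonic_add_X_sub_C_mul_derivative_divByMonic_eq_derivative p a)

theorem Polynomial.rootMultiplicity_mul_of_not_isRoot {R : Type*} [CommRing R] [IsDomain R]
    {p q : R[X]} {a : R} (hq : ¬ q.IsRoot a) :
    rootMultiplicity a (p * q) = rootMultiplicity a p := by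
  rcases eq_or_ne p 0 with rfl | hp
  · simp
  · have hq0 : q ≠ 0 := by
      rintro rfl
      simp at hq
    rw [rootMultiplicity_mul (mul_ne_zero hp hq0), rootMultiplicity_eq_zero hq, add_zero]

theorem L_eq_S_s15 (m : ℕ) : L m = Chebyshev.S ℤ m := by
  induction m using Nat.twoStepInduction with
  | zero => simp [L]
  | one => simp [L]
  | more m ih0 ih1 =>
    rw [L, ih0, ih1]
    push_cast
    rw [Chebyshev.S_add_two]

theorem A_eq_C_sub_two_s15 (m : ℕ) : A m = Chebyshev.C ℤ m - 2 := by
  match m with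
  | 0 => simp [A]
  | 1 => simp [A]
  | m + 2 =>
    have h := Chebyshev.S_eq_X_mul_S_add_C ℤ (m + 1)
    simp only [A, L_eq_S_s15]
    push_cast
    rw [show (m : ℤ) + 1 + 1 = m + 2 by ring, Chebyshev.S_add_two] at h
    rw [Chebyshev.S_add_two]
    linear_combination h

theorem A_mul (k n : ℕ) : A (k * n) = (A k).comp (A n + 2) := by
  simp only [A_eq_C_sub_two_s15, sub_add_cancel, Nat.cast_mul, Chebyshev.C_mul, sub_comp, ofNat_comp,
    Nat.cast_ofNat]

theorem A_eval_two (k : ℕ) : (A k).eval 2 = 0 := by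
  simp [A_eq_C_sub_two_s15, Chebyshev.C_eval_two]

theorem derivative_A_eval_two (k : ℕ) : (derivative (A k)).eval 2 = k ^ 2 := by
  simp [A_eq_C_sub_two_s15, Chebyshev.C_derivative_eq_S, Chebyshev.S_eval_two, sq]

theorem exists_A_eq_X_sub_two_mul (k : ℕ) : ∃ q : ℤ[X], q.eval 2 = k ^ 2 ∧ A k = (X - 2) * q :=
  ⟨A k /ₘ (X - C 2), by rw [eval_divByMonic_X_sub_C, derivative_A_eval_two],
    by rw [← C_ofNat, mul_divByMonic_eq_iff_isRoot.mpr (A_eval_two k)]⟩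

theorem stmt_15_general (n k : ℕ) (hk : 1 ≤ k) (a₀ : ℝ)
    (h : Polynomial.aeval a₀ (A n) = 0) :
    Polynomial.rootMultiplicity a₀ ((A (k * n)).map (Int.castRingHom ℝ)) =
      Polynomial.rootMultiplicity a₀ ((A n).map (Int.castRingHom ℝ)) := by
  obtain ⟨q, hq, hAk⟩ := exists_A_eq_X_sub_two_mul k
  have hfactor : A (k * n) = A n * q.comp (A n + 2) := by
    simp only [A_mul, hAk, mul_comp, sub_comp, X_comp, ofNat_comp, Nat.cast_ofNat,
      add_sub_cancel_right]
  have hAn : ((A n).map (Int.castRingHom ℝ)).eval a₀ = 0 := by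
    rwa [← algebraMap_int_eq, eval_map_algebraMap]
  have hk0 : k ≠ 0 := by omega
  have hq_ne : ¬ ((q.comp (A n + 2)).map (Int.castRingHom ℝ)).IsRoot a₀ := by
    simp [Polynomial.map_comp, hAn, eval_map, hq, hk0]
  rw [hfactor, Polynomial.map_mul, rootMultiplicity_mul_of_not_isRoot hq_ne]

theorem stmt_15 (n k : ℕ) (hn : 3 ≤ n) (hk : 1 ≤ k) (a₀ : ℝ)
    (h : Polynomial.aeval a₀ (A n) = 0) :
    Polynomial.rootMultiplicity a₀ ((A (k * n)).map (Int.castRingHom ℝ)) =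
      Polynomial.rootMultiplicity a₀ ((A n).map (Int.castRingHom ℝ)) :=
  stmt_15_general n k hk a₀ h
end

section
/- For every natural number n ≥ 3 divisible by 4, the root multiplicity of 0 in the polynomial A_n is exactly 2. (Equivalently, λ = 2 is an eigenvalue of multiplicity 2 of the Laplacian of Z_{4k} for every k ≥ 1.) -/
open Polynomial

lemma coeffs0 (p q : Polynomial ℤ) : (X * p - q).coeff 0 = - q.coeff 0 := by
  simp [mul_coeff_zero]

lemma coeffs1 (p q : Polynomial ℤ) : (X * p - q).coeff 1 = p.coeff 0 - q.coeff 1 := by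
  rw [coeff_sub]
  rw [show (1:ℕ) = 0 + 1 from rfl, coeff_X_mul]

lemma coeffs2 (p q : Polynomial ℤ) : (X * p - q).coeff 2 = p.coeff 1 - q.coeff 2 := by
  rw [coeff_sub]
  rw [show (2:ℕ) = 1 + 1 from rfl, coeff_X_mul]

lemma L_coeffs (k : ℕ) :
    (L (4*k)).coeff 0 = 1 ∧ (L (4*k)).coeff 1 = 0 ∧ (L (4*k)).coeff 2 = -(2*k^2+k) ∧
    (L (4*k+1)).coeff 0 = 0 ∧ (L (4*k+1)).coeff 1 = 2*k+1 ∧ (L (4*k+1)).coeff 2 = 0 ∧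
    (L (4*k+2)).coeff 0 = -1 ∧ (L (4*k+2)).coeff 1 = 0 ∧ (L (4*k+2)).coeff 2 = 2*k^2+3*k+1 ∧
    (L (4*k+3)).coeff 0 = 0 ∧ (L (4*k+3)).coeff 1 = -(2*k+2) ∧ (L (4*k+3)).coeff 2 = 0 := by
  induction k with
  | zero =>
    have h0 : L 0 = 1 := rfl
    have h1 : L 1 = X := rfl
    have h2 : L 2 = X * L 1 - L 0 := rfl
    have h3 : L 3 = X * L 2 - L 1 := rfl
    norm_num [h0, h1, h2, h3, coeffs0, coeffs1, coeffs2, coeff_one, coeff_X]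
  | succ k ih =>
    obtain ⟨a0, a1, a2, b0, b1, b2, c0, c1, c2, d0, d1, d2⟩ := ih
    have e4 : 4*(k+1) = (4*k+2) + 2 := by ring
    have e5 : 4*(k+1)+1 = (4*k+3) + 2 := by ring
    have e6 : 4*(k+1)+2 = (4*(k+1)) + 2 := by ring
    have e7 : 4*(k+1)+3 = (4*(k+1)+1) + 2 := by ring
    have h4 : L (4*(k+1)) = X * L (4*k+3) - L (4*k+2) := by rw [e4, L_add_two, show 4*k+2+1 = 4*k+3 from rfl]
    have h5 : L (4*(k+1)+1) = X * L (4*(k+1)) - L (4*k+3) := by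
      rw [e5, L_add_two, show 4*k+3+1 = 4*(k+1) by ring]
    have h6 : L (4*(k+1)+2) = X * L (4*(k+1)+1) - L (4*(k+1)) := by rw [e6, L_add_two]
    have h7 : L (4*(k+1)+3) = X * L (4*(k+1)+2) - L (4*(k+1)+1) := by rw [e7, L_add_two]
    have A0 : (L (4*(k+1))).coeff 0 = 1 := by rw [h4, coeffs0, c0]; ring
    have A1 : (L (4*(k+1))).coeff 1 = 0 := by rw [h4, coeffs1, d0, c1]; ring
    have A2 : (L (4*(k+1))).coeff 2 = -(2*(k+1:ℕ)^2+(k+1:ℕ)) := by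
      rw [h4, coeffs2, d1, c2]; push_cast; ring
    have B0 : (L (4*(k+1)+1)).coeff 0 = 0 := by rw [h5, coeffs0, d0]; ring
    have B1 : (L (4*(k+1)+1)).coeff 1 = 2*(k+1:ℕ)+1 := by
      rw [h5, coeffs1, A0, d1]; push_cast; ring
    have B2 : (L (4*(k+1)+1)).coeff 2 = 0 := by rw [h5, coeffs2, A1, d2]; ring
    have C0 : (L (4*(k+1)+2)).coeff 0 = -1 := by rw [h6, coeffs0, A0]
    have C1 : (L (4*(k+1)+2)).coeff 1 = 0 := by rw [h6, coeffs1, B0, A1]; ring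
    have C2 : (L (4*(k+1)+2)).coeff 2 = 2*(k+1:ℕ)^2+3*(k+1:ℕ)+1 := by
      rw [h6, coeffs2, B1, A2]; push_cast; ring
    have D0 : (L (4*(k+1)+3)).coeff 0 = 0 := by rw [h7, coeffs0, B0]; ring
    have D1 : (L (4*(k+1)+3)).coeff 1 = -(2*(k+1:ℕ)+2) := by
      rw [h7, coeffs1, C0, B1]; push_cast; ring
    have D2 : (L (4*(k+1)+3)).coeff 2 = 0 := by rw [h7, coeffs2, C1, B2]; ring
    exact ⟨A0, A1, A2, B0, B1, B2, C0, C1, C2, D0, D1, D2⟩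

lemma A_coeffs (m : ℕ) :
    (A (4*(m+1))).coeff 0 = 0 ∧ (A (4*(m+1))).coeff 1 = 0 ∧
    (A (4*(m+1))).coeff 2 = -(4*(m+1:ℤ)^2) := by
  have hA : A (4*(m+1)) = L (4*m+2+2) - L (4*m+2) - 2 := by
    rw [show 4*(m+1) = (4*m+2)+2 by ring]; rfl
  have h1 := L_coeffs m
  have h2 := L_coeffs (m+1)
  obtain ⟨-, -, -, -, -, -, c0, c1, c2, -, -, -⟩ := h1
  obtain ⟨a0, a1, a2, -⟩ := h2
  rw [show 4*m+2+2 = 4*(m+1) by ring] at hA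
  refine ⟨?_, ?_, ?_⟩ <;>
    simp only [hA, coeff_sub, a0, a1, a2, c0, c1, c2] <;>
    push_cast <;>
    simp [Polynomial.coeff_ofNat_succ] <;> ring

theorem stmt_16 (n : ℕ) (hn : 3 ≤ n) (h4 : 4 ∣ n) :
    Polynomial.rootMultiplicity (0 : ℝ) ((A n).map (Int.castRingHom ℝ)) = 2 := by
  obtain ⟨k, rfl⟩ := h4
  obtain ⟨m, rfl⟩ : ∃ m, k = m + 1 := ⟨k - 1, by omega⟩
  obtain ⟨h0, h1, h2⟩ := A_coeffs m
  set p := (A (4*(m+1))).map (Int.castRingHom ℝ) with hp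
  have e0 : p.coeff 0 = 0 := by rw [hp, coeff_map, h0]; simp
  have e1 : p.coeff 1 = 0 := by rw [hp, coeff_map, h1]; simp
  have e2 : p.coeff 2 ≠ 0 := by
    rw [hp, coeff_map, h2]
    have hpos : (0:ℝ) < 4*((m:ℝ)+1)^2 := by positivity
    intro h
    simp only [Int.coe_castRingHom] at h
    push_cast at h
    rw [neg_eq_zero] at h
    linarith
  have hp0 : p ≠ 0 := fun h => e2 (by rw [h]; simp)
  refine le_antisymm ?_ ?_
  · rw [Polynomial.rootMultiplicity_le_iff hp0, map_zero, sub_zero, X_pow_dvd_iff]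
    intro h
    exact e2 (h 2 (by norm_num))
  · rw [Polynomial.le_rootMultiplicity_iff hp0, map_zero, sub_zero, X_pow_dvd_iff]
    intro d hd
    interval_cases d
    · exact e0
    · exact e1
end

section
/- Let n ≥ 3 and m ≥ 1 be natural numbers and let a₀ be a real number with A_n(a₀) = 0. Then A_n(A_m(a₀) + 2) = 0. (In terms of eigenvalues: if λ₀ is an eigenvalue of the Laplacian of Z_n, then λ₁ = −A_m(2 − λ₀) is again an eigenvalue of the Laplacian of Z_n.) -/
open Polynomial

lemma Arec : ∀ k : ℕ, A (k+2) + 2 = X * (A (k+1) + 2) - (A k + 2)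
  | 0 => by simp [A, L]; ring
  | 1 => by simp [A, L]; ring
  | (k+2) => by
      show L (k+4) - L (k+2) - 2 + 2 = X * (L (k+3) - L (k+1) - 2 + 2) - (L (k+2) - L k - 2 + 2)
      have h4 : L (k+4) = X * L (k+3) - L (k+2) := rfl
      have h2 : L (k+2) = X * L (k+1) - L k := rfl
      rw [h4]; nth_rewrite 1 [h2]
      ring

lemma arec (x : ℝ) (k : ℕ) :
    aeval x (A (k+2)) + 2 = x * (aeval x (A (k+1)) + 2) - (aeval x (A k) + 2) := by
  have := congrArg (aeval x) (Arec k)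
  simpa [map_add, map_sub, map_mul, map_ofNat] using this

lemma fA (θ : ℝ) : ∀ k : ℕ, aeval (2 * Real.cos θ) (A k) + 2 = 2 * Real.cos (k * θ) := by
  have key : ∀ k : ℕ, (aeval (2 * Real.cos θ) (A k) + 2 = 2 * Real.cos (k * θ)) ∧
      (aeval (2 * Real.cos θ) (A (k+1)) + 2 = 2 * Real.cos ((k+1 : ℕ) * θ)) := by
    intro k
    induction k with
    | zero => constructor <;> simp [A, map_ofNat]
    | succ k ih =>
      refine ⟨ih.2, ?_⟩
      rw [arec, ih.1, ih.2]
      push_cast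
      have e1 : ((k : ℝ) + 1 + 1) * θ = ((k+1 : ℝ) * θ) + θ := by ring
      have e2 : ((k : ℝ)) * θ = ((k+1 : ℝ) * θ) - θ := by ring
      rw [e1, e2, Real.cos_add, Real.cos_sub]
      ring
  exact fun k => (key k).1

lemma negA (x : ℝ) : ∀ k : ℕ, aeval (-x) (A k) + 2 = (-1)^k * (aeval x (A k) + 2) := by
  have key : ∀ k : ℕ, (aeval (-x) (A k) + 2 = (-1)^k * (aeval x (A k) + 2)) ∧
      (aeval (-x) (A (k+1)) + 2 = (-1)^(k+1) * (aeval x (A (k+1)) + 2)) := by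
    intro k
    induction k with
    | zero => constructor <;> simp [A, map_ofNat]
    | succ k ih =>
      refine ⟨ih.2, ?_⟩
      rw [arec, arec, ih.1, ih.2]
      ring
  exact fun k => (key k).1

lemma grow (x : ℝ) (hx : 2 < x) : ∀ k : ℕ,
    2 ≤ aeval x (A k) + 2 ∧ aeval x (A k) + 2 ≤ aeval x (A (k+1)) + 2 ∧
      2 < aeval x (A (k+1)) + 2 := by
  intro k
  induction k with
  | zero =>
    refine ⟨by simp [A], ?_, ?_⟩ <;> simp [A, map_ofNat] <;> linarith
  | succ k ih =>
    obtain ⟨h1, h2, h3⟩ := ih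
    have hstep : aeval x (A (k+1)) + 2 < aeval x (A (k+2)) + 2 := by
      rw [arec]
      nlinarith
    exact ⟨le_of_lt h3, le_of_lt hstep, lt_trans h3 hstep⟩

theorem stmt_18 (n m : ℕ) (hn : 3 ≤ n) (hm : 1 ≤ m) (a₀ : ℝ)
    (h : Polynomial.aeval a₀ (A n) = 0) :
    Polynomial.aeval (Polynomial.aeval a₀ (A m) + 2) (A n) = 0 := by
  obtain ⟨n', rfl⟩ : ∃ n', n = n' + 1 := ⟨n - 1, by omega⟩
  rcases lt_or_ge 2 a₀ with hgt | hle
  · exact absurd (by linarith [h]) (ne_of_gt (grow a₀ hgt n').2.2).symm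
  rcases lt_or_ge a₀ (-2) with hlt | hge
  · exfalso
    have hneg : 2 < -a₀ := by linarith
    have hg := (grow (-a₀) hneg n').2.2
    have hn2 : aeval a₀ (A (n'+1)) + 2 = (-1)^(n'+1) * (aeval (-a₀) (A (n'+1)) + 2) := by
      have := negA (-a₀) (n'+1)
      simpa using this
    rw [h] at hn2
    rcases Nat.even_or_odd (n'+1) with he | ho
    · rw [he.neg_one_pow, one_mul] at hn2; linarith
    · rw [ho.neg_one_pow, neg_one_mul] at hn2; linarith
  · -- |a₀| ≤ 2
    set θ := Real.arccos (a₀ / 2) with hθ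
    have ha : a₀ = 2 * Real.cos θ := by
      rw [hθ, Real.cos_arccos (by linarith) (by linarith)]; ring
    have h1 : 2 * Real.cos ((n'+1 : ℕ) * θ) = 2 := by
      rw [← fA θ (n'+1), ← ha, h]; ring
    have h2 : Real.cos ((n'+1 : ℕ) * θ) = 1 := by linarith
    obtain ⟨k, hk⟩ := (Real.cos_eq_one_iff _).1 h2
    have hb : aeval a₀ (A m) + 2 = 2 * Real.cos ((m : ℕ) * θ) := by
      rw [ha, fA]
    rw [hb]
    have hfa := fA ((m : ℕ) * θ) (n'+1)
    have harg : ((n'+1 : ℕ) : ℝ) * ((m : ℕ) * θ) = ((k * m : ℤ) : ℝ) * (2 * Real.pi) := by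
      push_cast
      push_cast at hk
      nlinarith [hk]
    have hcos : Real.cos (((n'+1 : ℕ) : ℝ) * ((m : ℕ) * θ)) = 1 := by
      rw [harg]; exact Real.cos_int_mul_two_pi _
    rw [hcos] at hfa
    linarith
end
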